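/- arXiv:2501.07918 — 4 statements merged into one kernel-verified Lean document; each statement's English description precedes it below -/
import Mathlib

section
/- The bounded semantics ⊨^k is not monotonic in k: there exist a program graph G, a set O of observed locations, and an OHyperLTL_safe formula ψ such that ¬(⊨^1 ψ) yet ⊨^k ψ holds for every k ≥ 2. Concretely, over the integers, take G with locations L = {ℓ₀, ℓ₁}, a single edge (ℓ₀, ℓ₁) with guard true and effect x := 0, initial location ℓ₀, O = {ℓ₁}, and ψ = ∀^G π:{ℓ₁}. □(x_π > 0); then ¬(⊨^1 ψ) but ⊨^k ψ for all k ≥ 2, so in particular ⊨^{k+1} ψ does not imply ⊨^k ψ. -/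
open scoped Classical

namespace HyperSE

variable {Val X L V : Type}

/-- Guarded-assignment instructions: deterministic assignment of (the shallow semantics of)
a term to a variable, or a nondeterministic assignment (`havoc`). -/
inductive Instr (Val X : Type) where
  | assign (x : X) (e : (X → Val) → Val)
  | havoc (x : X)

/-- Concrete execution of an instruction on memories. -/
def Instr.exec : Instr Val X → (X → Val) → (X → Val) → Prop
  | .assign x e, m, m' => m' = Function.update m x (e m)
  | .havoc x, m, m' => ∃ v : Val, m' = Function.update m x v

/-- A program graph: edges between locations, an initial location, and an
instruction (`effect`) and a guard for every edge. -/
structure ProgramGraph (Val X L : Type) where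
  edges : L → L → Prop
  init : L
  effect : L → L → Instr Val X
  guard : L → L → (X → Val) → Prop

/-- Execution states: a location together with a memory. -/
abbrev State (Val X L : Type) := L × (X → Val)

/-- The transition relation of a program graph. -/
def ProgramGraph.Step (G : ProgramGraph Val X L) (s₁ s₂ : State Val X L) : Prop :=
  G.edges s₁.1 s₂.1 ∧ G.guard s₁.1 s₂.1 s₁.2 ∧ (G.effect s₁.1 s₂.1).exec s₁.2 s₂.2

/-- Finite traces: nonempty finite sequences of states starting in the initial state
(initial location together with the fixed initial memory `m₀`) and following `Step`. -/
def FinTraces (m₀ : X → Val) (G : ProgramGraph Val X L) : Set (List (State Val X L)) :=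
  { τ | τ.head? = some (G.init, m₀) ∧ τ.Chain' G.Step }

/-- Projection `[σ]_O` of a finite trace onto the observed locations `O`. -/
noncomputable def obs (O : Set L) (σ : List (State Val X L)) : List (State Val X L) :=
  σ.filter fun s => decide (s.1 ∈ O)

/-- `|σ|_O`: the number of observed states of `σ`. -/
noncomputable def obsLen (O : Set L) (σ : List (State Val X L)) : ℕ :=
  (obs O σ).length

/-- `Traces*_O(G)`: observational projections of the finite traces of `G`. -/
def TracesO (m₀ : X → Val) (G : ProgramGraph Val X L) (O : Set L) :
    Set (List (State Val X L)) :=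
  { t | ∃ τ ∈ FinTraces m₀ G, t = obs O τ }

/-- `Traces^k_O(G)`: observational projections of length `k`. -/
def TracesKO (m₀ : X → Val) (G : ProgramGraph Val X L) (O : Set L) (k : ℕ) :
    Set (List (State Val X L)) :=
  { t | t ∈ TracesO m₀ G O ∧ t.length = k }

/-- Infinite traces of a program graph. -/
def InfTraces (m₀ : X → Val) (G : ProgramGraph Val X L) : Set (ℕ → State Val X L) :=
  { σ | σ 0 = (G.init, m₀) ∧ ∀ i, G.Step (σ i) (σ (i + 1)) }

/-- `t` is the subsequence of `σ` consisting of exactly the states whose location is in `O`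
(in particular `σ` has infinitely many observations). -/
def IsObsSubseq (O : Set L) (σ t : ℕ → State Val X L) : Prop :=
  ∃ f : ℕ → ℕ, StrictMono f ∧ (∀ n, t n = σ (f n)) ∧ (∀ n, (σ (f n)).1 ∈ O) ∧
    ∀ i, (σ i).1 ∈ O → ∃ n, f n = i

/-- `Traces^ω_O(G)`: observational projections of the infinite traces of `G` that have
infinitely many observations. -/
def TracesOmegaO (m₀ : X → Val) (G : ProgramGraph Val X L) (O : Set L) :
    Set (ℕ → State Val X L) :=
  { t | ∃ σ ∈ InfTraces m₀ G, IsObsSubseq O σ t }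

/-- OHyperLTL_safe formulas: a prefix of trace quantifiers (each annotated with a program
graph and a set of observed locations), followed by an invariant `□φ`, where the
quantifier-free formula `φ` is represented shallowly by a predicate on valuations of the
indexed variables `x_π`. -/
inductive HForm (Val X L V : Type) where
  | all (G : ProgramGraph Val X L) (O : Set L) (π : V) (ψ : HForm Val X L V)
  | ex (G : ProgramGraph Val X L) (O : Set L) (π : V) (ψ : HForm Val X L V)
  | always (φ : (V → X → Val) → Prop)

/-- The valuation `Pi_i` (with default value `m₀ x` for unbound trace variables). -/
def memAt (m₀ : X → Val) (Pi : V → List (State Val X L)) (i : ℕ) : V → X → Val :=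
  fun π x =>
    match (Pi π)[i]? with
    | some s => s.2 x
    | none => m₀ x

/-- Bounded semantics `Pi ⊨^k ψ`: quantifiers range over observed traces of length
exactly `k`, and the invariant is checked at positions `0 ≤ i < k`.
The empty (partial) trace assignment is modelled by the total map `fun _ => []`. -/
def SatK (m₀ : X → Val) (k : ℕ) :
    HForm Val X L V → (V → List (State Val X L)) → Prop
  | .all G O π ψ, Pi => ∀ σ ∈ TracesKO m₀ G O k, SatK m₀ k ψ (Function.update Pi π σ)
  | .ex G O π ψ, Pi => ∃ σ ∈ TracesKO m₀ G O k, SatK m₀ k ψ (Function.update Pi π σ)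
  | .always φ, Pi => ∀ i < k, φ (memAt m₀ Pi i)

/-- `⊨^k ψ` : satisfaction of `ψ` under the bounded semantics, starting from the empty
trace assignment. -/
def ModelsK (m₀ : X → Val) (k : ℕ) (ψ : HForm Val X L V) : Prop :=
  SatK m₀ k ψ fun _ => []

/-- Upper-bounded semantics `⊨^{≤ n} ψ`. -/
def ModelsUpTo (m₀ : X → Val) (n : ℕ) (ψ : HForm Val X L V) : Prop :=
  ∀ k ≤ n, ModelsK m₀ k ψ

/-- Infinite-trace semantics `Pi ⊨^ω ψ`. -/
def SatOmega (m₀ : X → Val) :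
    HForm Val X L V → (V → (ℕ → State Val X L)) → Prop
  | .all G O π ψ, Pi => ∀ σ ∈ TracesOmegaO m₀ G O, SatOmega m₀ ψ (Function.update Pi π σ)
  | .ex G O π ψ, Pi => ∃ σ ∈ TracesOmegaO m₀ G O, SatOmega m₀ ψ (Function.update Pi π σ)
  | .always φ, Pi => ∀ i : ℕ, φ fun π x => (Pi π i).2 x

/-- `⊨^ω ψ` : satisfaction of `ψ` under the infinite-trace semantics, starting from the
empty trace assignment (modelled by the default environment). -/
def ModelsOmega [Inhabited L] (m₀ : X → Val) (ψ : HForm Val X L V) : Prop :=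
  SatOmega m₀ ψ fun _ _ => (default, m₀)

/-- `G` is infinitely observable w.r.t. `O`: every observed trace with `k` observations is
a (length-`k`) prefix of some infinite observed trace. -/
def ProgramGraph.InfObs (m₀ : X → Val) (G : ProgramGraph Val X L) (O : Set L) : Prop :=
  ∀ k : ℕ, ∀ t ∈ TracesKO m₀ G O k, ∃ t' ∈ TracesOmegaO m₀ G O,
    t = List.ofFn fun i : Fin k => t' i

/-- The list of quantified program graphs (with their observed locations) of a formula. -/
def HForm.graphs : HForm Val X L V → List (ProgramGraph Val X L × Set L)
  | .all G O _ ψ => (G, O) :: ψ.graphs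
  | .ex G O _ ψ => (G, O) :: ψ.graphs
  | .always _ => []

/-- A formula is infinitely observable if all its quantified program graphs are. -/
def HForm.InfObs (m₀ : X → Val) (ψ : HForm Val X L V) : Prop :=
  ∀ p ∈ ψ.graphs, ProgramGraph.InfObs m₀ p.1 p.2

/-- `G` is `(k,O)`-observable: there is a bound `b` such that every finite trace with
exactly `k` observations has a prefix of length `< b` with the same `k` observations. -/
def ProgramGraph.Observable (m₀ : X → Val) (G : ProgramGraph Val X L) (O : Set L)
    (k : ℕ) : Prop :=
  ∃ b : ℕ, ∀ τ ∈ FinTraces m₀ G, obsLen O τ = k →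
    ∃ τ', τ' <+: τ ∧ obsLen O τ' = k ∧ τ'.length < b

/-! ### Symbolic execution

Symbolic variables are drawn from the countably infinite set `V* = ℕ` (one disjoint bank
of symbolic variables per trace variable is used when evaluating symbolic encodings of
formulas). Symbolic terms and path formulas are represented shallowly as functions of
assignments `ρ : ℕ → Val`. Fresh variables are chosen by a fixed deterministic scheme:
the symbolic state carries a counter of the used variables. -/

/-- A symbolic state: a location, a path formula, a symbolic memory and the counter of
the fresh-variable scheme. -/
structure SymState (Val X L : Type) where
  loc : L
  path : (ℕ → Val) → Prop
  smem : X → (ℕ → Val) → Val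
  ctr : ℕ

/-- Symbolic execution of an instruction on (symbolic memory, fresh counter) pairs. -/
def Instr.symExec : Instr Val X →
    ((X → (ℕ → Val) → Val) × ℕ) → ((X → (ℕ → Val) → Val) × ℕ) → Prop
  | .assign x e, p, p' =>
      p'.2 = p.2 ∧ p'.1 = Function.update p.1 x fun ρ => e fun y => p.1 y ρ
  | .havoc x, p, p' =>
      p'.2 = p.2 + 1 ∧ p'.1 = Function.update p.1 x fun ρ => ρ p.2

/-- The symbolic transition relation: follow an edge, conjoin the (substituted) guard to
the path formula, require satisfiability, and symbolically execute the effect. -/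
def ProgramGraph.SymStep (G : ProgramGraph Val X L) (s₁ s₂ : SymState Val X L) : Prop :=
  G.edges s₁.loc s₂.loc ∧
  s₂.path = (fun ρ => s₁.path ρ ∧ G.guard s₁.loc s₂.loc fun x => s₁.smem x ρ) ∧
  (∃ ρ, s₂.path ρ) ∧
  (G.effect s₁.loc s₂.loc).symExec (s₁.smem, s₁.ctr) (s₂.smem, s₂.ctr)

/-- The initial symbolic state `⟨ℓ₀, true, m̂₀⟩` (with `m̂₀` evaluating to `m₀`). -/
def initSym (m₀ : X → Val) (G : ProgramGraph Val X L) : SymState Val X L :=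
  ⟨G.init, fun _ => True, fun x _ => m₀ x, 0⟩

/-- `SymTraces*(G)`. -/
def SymTraces (m₀ : X → Val) (G : ProgramGraph Val X L) : Set (List (SymState Val X L)) :=
  { τ | τ.head? = some (initSym m₀ G) ∧ τ.Chain' G.SymStep }

/-- Projection of a symbolic trace onto observed locations. -/
noncomputable def obsSym (O : Set L) (τ : List (SymState Val X L)) :
    List (SymState Val X L) :=
  τ.filter fun s => decide (s.loc ∈ O)

/-- `SymTraces*_O(G)`. -/
def SymTracesO (m₀ : X → Val) (G : ProgramGraph Val X L) (O : Set L) :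
    Set (List (SymState Val X L)) :=
  { t | ∃ τ ∈ SymTraces m₀ G, t = obsSym O τ }

/-- `SymTraces^k_O(G)`. -/
def SymTracesKO (m₀ : X → Val) (G : ProgramGraph Val X L) (O : Set L) (k : ℕ) :
    Set (List (SymState Val X L)) :=
  { t | t ∈ SymTracesO m₀ G O ∧ t.length = k }

/-- `path(τ̂)`: the accumulated path formula of a symbolic trace (the path formula of its
last state). -/
def pathOf (τ : List (SymState Val X L)) : (ℕ → Val) → Prop :=
  match τ.getLast? with
  | some s => s.path
  | none => fun _ => True

/-- The fresh-variable counter of (the last state of) a symbolic trace; the free symbolic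
variables of the trace are exactly the variables below this counter. -/
def ctrOf (τ : List (SymState Val X L)) : ℕ :=
  match τ.getLast? with
  | some s => s.ctr
  | none => 0

/-- Concretization `γ_ρ(τ̂)` of a symbolic trace under an assignment `ρ` of the symbolic
variables. -/
def conc (ρ : ℕ → Val) (τ : List (SymState Val X L)) : List (State Val X L) :=
  τ.map fun s => (s.loc, fun x => s.smem x ρ)

/-- Concretization `γ(T)` of a set of symbolic traces:
`γ(T) = ⋃_{τ̂ ∈ T} { γ_ρ(τ̂) | ρ ⊨ path(τ̂) }`. -/
def concSet (T : Set (List (SymState Val X L))) : Set (List (State Val X L)) :=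
  { τ | ∃ t ∈ T, ∃ ρ, pathOf t ρ ∧ τ = conc ρ t }

/-- `ψ` is `k`-encodable: `SymTraces^k_O(G)` is finite for every quantified program. -/
def HForm.EncodableAt (m₀ : X → Val) (k : ℕ) (ψ : HForm Val X L V) : Prop :=
  ∀ p ∈ ψ.graphs, (SymTracesKO m₀ p.1 p.2 k).Finite

/-- `ρ'` agrees with `ρ` except possibly on the symbolic variables of the bank of the
trace variable `π` below the counter `c` (i.e. except on `FV` of the trace bound to `π`). -/
def AgreesExc (π : V) (c : ℕ) (ρ ρ' : V → ℕ → Val) : Prop :=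
  ∀ π' n, (π' ≠ π ∨ c ≤ n) → ρ' π' n = ρ π' n

/-- The symbolic valuation `Pî_i` (with default value `m₀ x` for unbound trace variables). -/
def smemAt (m₀ : X → Val) (Pih : V → List (SymState Val X L)) (ρ : V → ℕ → Val) (i : ℕ) :
    V → X → Val :=
  fun π x =>
    match (Pih π)[i]? with
    | some s => s.smem x (ρ π)
    | none => m₀ x

/-- The symbolic encoding `⟦ψ⟧^k_Pî` of the bounded semantics, as a (shallow) first-order
formula over the symbolic variables (one bank `ρ π : ℕ → Val` per trace variable `π`):
universal quantification becomes a conjunction over all symbolic traces (universally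
quantifying their free variables, guarded by the path condition), existential
quantification becomes a disjunction (existentially quantifying the free variables,
conjoined with the path condition), and `□φ` becomes the conjunction of the instances of
`φ` at positions `0 ≤ i < k`. -/
def Enc (m₀ : X → Val) (k : ℕ) :
    HForm Val X L V → (V → List (SymState Val X L)) → (V → ℕ → Val) → Prop
  | .all G O π ψ, Pih, ρ =>
      ∀ t ∈ SymTracesKO m₀ G O k, ∀ ρ', AgreesExc π (ctrOf t) ρ ρ' →
        pathOf t (ρ' π) → Enc m₀ k ψ (Function.update Pih π t) ρ'
  | .ex G O π ψ, Pih, ρ =>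
      ∃ t ∈ SymTracesKO m₀ G O k, ∃ ρ', AgreesExc π (ctrOf t) ρ ρ' ∧
        pathOf t (ρ' π) ∧ Enc m₀ k ψ (Function.update Pih π t) ρ'
  | .always φ, Pih, ρ => ∀ i < k, φ (smemAt m₀ Pih ρ i)

/-- `Pi ≃_ρ Pî`: the concrete trace assignment `Pi` is the concretization of the symbolic
trace assignment `Pî` under `ρ` (and `ρ` satisfies all corresponding path conditions). -/
def SimRho (ρ : V → ℕ → Val) (Pi : V → List (State Val X L))
    (Pih : V → List (SymState Val X L)) : Prop :=
  ∀ π, pathOf (Pih π) (ρ π) ∧ Pi π = conc (ρ π) (Pih π)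

end HyperSE

namespace HyperSE

/-- The bounded semantics `⊨^k` is not monotonic in `k`: over the
integers, for the program graph `G` with locations `{ℓ₀, ℓ₁}`, a single edge `(ℓ₀, ℓ₁)`
with guard true and effect `x := 0`, observed locations `O = {ℓ₁}` and the formula
`ψ = ∀^G π:{ℓ₁}. □ (x_π > 0)`, we have `¬(⊨^1 ψ)` but `⊨^k ψ` for all `k ≥ 2`; in
particular `⊨^{k+1} ψ` does not imply `⊨^k ψ`. -/
theorem boundedK_not_monotone (m₀ : Unit → ℤ) :
    let G : ProgramGraph ℤ Unit (Fin 2) :=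
      { edges := fun a b => a = 0 ∧ b = 1
        init := 0
        effect := fun _ _ => Instr.assign () fun _ => (0 : ℤ)
        guard := fun _ _ _ => True }
    let ψ : HForm ℤ Unit (Fin 2) Unit :=
      HForm.all G {(1 : Fin 2)} () (HForm.always fun v => (0 : ℤ) < v () ())
    (¬ ModelsK m₀ 1 ψ) ∧ (∀ k, 2 ≤ k → ModelsK m₀ k ψ) ∧
      ∃ k, ModelsK m₀ (k + 1) ψ ∧ ¬ ModelsK m₀ k ψ := by
  intro G ψ
  have key : ∀ τ ∈ FinTraces m₀ G,
      τ = [((0 : Fin 2), m₀)] ∨ ∃ m, τ = [((0 : Fin 2), m₀), ((1 : Fin 2), m)] := by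
    rintro τ ⟨hh, hc⟩
    match τ with
    | [] => simp at hh
    | [s] =>
      simp only [List.head?] at hh
      left
      simpa [G] using hh
    | s :: s2 :: rest =>
      simp only [List.head?, Option.some.injEq] at hh
      have hstep := (List.isChain_cons_cons.1 hc).1
      have hc2 := (List.isChain_cons_cons.1 hc).2
      have hs2 : s2.1 = 1 := hstep.1.2
      have hrest : rest = [] := by
        cases rest with
        | nil => rfl
        | cons s3 r =>
          have h2 := (List.isChain_cons_cons.1 hc2).1
          have : s2.1 = 0 := h2.1.1
          simp [this] at hs2
      subst hrest
      right
      exact ⟨s2.2, by simp [hh, ← hs2, G]⟩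
  have obschar : ∀ t ∈ TracesO m₀ G {(1 : Fin 2)},
      t = [] ∨ ∃ m, t = [((1 : Fin 2), m)] := by
    rintro t ⟨τ, hτ, rfl⟩
    rcases key τ hτ with rfl | ⟨m, rfl⟩
    · left; simp [obs, show ¬ ((0:Fin 2) ∈ ({(1:Fin 2)} : Set (Fin 2))) from by decide]
    · right; exact ⟨m, by
        simp [obs, show ¬ ((0:Fin 2) ∈ ({(1:Fin 2)} : Set (Fin 2))) from by decide,
          show (1:Fin 2) ∈ ({(1:Fin 2)} : Set (Fin 2)) from rfl]⟩
  have not1 : ¬ ModelsK m₀ 1 ψ := by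
    intro h
    have hmem : [((1 : Fin 2), fun _ => (0:ℤ))] ∈ TracesKO m₀ G {(1 : Fin 2)} 1 := by
      refine ⟨⟨[((0 : Fin 2), m₀), ((1 : Fin 2), fun _ => (0:ℤ))], ⟨rfl, ?_⟩, ?_⟩, rfl⟩
      · refine List.isChain_cons_cons.2 ⟨⟨⟨rfl, rfl⟩, trivial, ?_⟩, List.isChain_singleton _⟩
        funext u; cases u; simp [Function.update]
      · simp [obs, show ¬ ((0:Fin 2) ∈ ({(1:Fin 2)} : Set (Fin 2))) from by decide,
          show (1:Fin 2) ∈ ({(1:Fin 2)} : Set (Fin 2)) from rfl]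
    have := h _ hmem 0 (by norm_num)
    simp [memAt, Function.update] at this
  have sat2 : ∀ k, 2 ≤ k → ModelsK m₀ k ψ := by
    intro k hk σ hσ
    exfalso
    rcases obschar σ hσ.1 with rfl | ⟨m, rfl⟩ <;>
      · have := hσ.2; simp at this; omega
  refine ⟨not1, sat2, 1, sat2 2 le_rfl, not1⟩

end HyperSE
end

section
/- For every program graph G, the concretization of its set of symbolic traces equals its set of concrete finite traces: γ(SymTraces*(G)) = Traces*(G). That is, (soundness) for every τ̂ ∈ SymTraces*(G) and every assignment ρ : V* → Val satisfying path(τ̂), γ_ρ(τ̂) ∈ Traces*(G); and (completeness) for every τ ∈ Traces*(G) there exist τ̂ ∈ SymTraces*(G) and an assignment ρ satisfying path(τ̂) with τ = γ_ρ(τ̂). -/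
open scoped Classical

namespace HyperSE

private lemma conc_smem_update {Val X L : Type} (s : SymState Val X L) (x : X)
    (f : (ℕ → Val) → Val) (ρ : ℕ → Val) :
    (fun y => (Function.update s.smem x f) y ρ)
      = Function.update (fun y => s.smem y ρ) x (f ρ) := by
  funext y
  by_cases hy : y = x
  · subst hy; simp
  · simp [Function.update_of_ne hy]

private lemma sound_chain {Val X L : Type} {G : ProgramGraph Val X L} (ρ : ℕ → Val) :
    ∀ (τ : List (SymState Val X L)) (s : SymState Val X L),
      (s :: τ).Chain' G.SymStep → pathOf (s :: τ) ρ →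
      (conc ρ (s :: τ)).Chain' G.Step ∧ s.path ρ := by
  intro τ
  induction τ with
  | nil =>
      intro s _ hp
      exact ⟨List.isChain_singleton _, hp⟩
  | cons b τ' ih =>
      intro s hc hp
      rw [List.Chain', List.isChain_cons_cons] at hc
      obtain ⟨hstep, hc'⟩ := hc
      have hp' : pathOf (b :: τ') ρ := by
        unfold pathOf at hp ⊢
        rwa [List.getLast?_cons_cons] at hp
      obtain ⟨hchain, hbp⟩ := ih b hc' hp'
      obtain ⟨hedge, hpath, _, hexec⟩ := hstep
      rw [hpath] at hbp
      obtain ⟨hsp, hguard⟩ := hbp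
      refine ⟨?_, hsp⟩
      show List.Chain' G.Step
        ((s.loc, fun x => s.smem x ρ) :: (b.loc, fun x => b.smem x ρ) :: conc ρ τ')
      rw [List.Chain', List.isChain_cons_cons]
      refine ⟨⟨hedge, hguard, ?_⟩, hchain⟩
      cases heff : G.effect s.loc b.loc with
      | assign x e =>
          rw [heff] at hexec
          obtain ⟨-, hsm⟩ := hexec
          have hsm' : b.smem = Function.update s.smem x fun ρ => e fun y => s.smem y ρ := hsm
          show (fun y => b.smem y ρ)
            = Function.update (fun y => s.smem y ρ) x (e fun y => s.smem y ρ)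
          rw [hsm', conc_smem_update]
      | havoc x =>
          rw [heff] at hexec
          obtain ⟨-, hsm⟩ := hexec
          have hsm' : b.smem = Function.update s.smem x fun ρ => ρ s.ctr := hsm
          refine ⟨ρ s.ctr, ?_⟩
          show (fun y => b.smem y ρ) = Function.update (fun y => s.smem y ρ) x (ρ s.ctr)
          rw [hsm', conc_smem_update]

private lemma complete_chain {Val X L : Type} (G : ProgramGraph Val X L) :
    ∀ (σ : List (State Val X L)) (s : SymState Val X L) (ρ : ℕ → Val),
      σ.Chain' G.Step →
      σ.head? = some (s.loc, fun x => s.smem x ρ) →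
      s.path ρ →
      (∀ (x : X) (ρ' : ℕ → Val), (∀ n < s.ctr, ρ' n = ρ n) → s.smem x ρ' = s.smem x ρ) →
      (∀ ρ' : ℕ → Val, (∀ n < s.ctr, ρ' n = ρ n) → (s.path ρ' ↔ s.path ρ)) →
      ∃ τ ρ', τ.head? = some s ∧ τ.Chain' G.SymStep ∧ pathOf τ ρ' ∧
        conc ρ' τ = σ ∧ ∀ n < s.ctr, ρ' n = ρ n := by
  intro σ
  induction σ with
  | nil => intro s ρ _ h; simp at h
  | cons a rest ih =>
      intro s ρ hch hhead hpathρ hdepm hdepp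
      have ha : a = (s.loc, fun x => s.smem x ρ) := by simpa using hhead
      subst ha
      cases rest with
      | nil =>
          exact ⟨[s], ρ, rfl, List.isChain_singleton _, hpathρ, rfl, fun _ _ => rfl⟩
      | cons a' rest' =>
          rw [List.Chain', List.isChain_cons_cons] at hch
          obtain ⟨⟨hE, hg, hex⟩, hch'⟩ := hch
          -- the common path formula of the successor symbolic state
          set P : (ℕ → Val) → Prop :=
            fun ρ' => s.path ρ' ∧ G.guard s.loc a'.1 fun x => s.smem x ρ' with hP
          cases heff : G.effect s.loc a'.1 with
          | assign x e =>
              rw [show ((s.loc, fun x => s.smem x ρ) : State Val X L).1 = s.loc from rfl,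
                heff] at hex
              have hex' : a'.2 = Function.update (fun y => s.smem y ρ) x
                  (e fun y => s.smem y ρ) := hex
              set s' : SymState Val X L :=
                ⟨a'.1, P, Function.update s.smem x (fun ρ' => e fun y => s.smem y ρ'), s.ctr⟩
                with hs'
              have hdepm' : ∀ (y : X) (ρ' : ℕ → Val), (∀ n < s'.ctr, ρ' n = ρ n) →
                  s'.smem y ρ' = s'.smem y ρ := by
                intro y ρ' hagree
                by_cases hy : y = x
                · subst hy
                  show (Function.update s.smem y _) y ρ' = (Function.update s.smem y _) y ρ
                  simp only [Function.update_self]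
                  congr 1
                  funext z
                  exact hdepm z ρ' hagree
                · show (Function.update s.smem x _) y ρ' = (Function.update s.smem x _) y ρ
                  simp only [Function.update_of_ne hy]
                  exact hdepm y ρ' hagree
              have hmemeq : ∀ ρ' : ℕ → Val, (∀ n < s.ctr, ρ' n = ρ n) →
                  (fun y => s.smem y ρ') = fun y => s.smem y ρ := by
                intro ρ' hagree; funext y; exact hdepm y ρ' hagree
              have hdepp' : ∀ ρ' : ℕ → Val, (∀ n < s'.ctr, ρ' n = ρ n) →
                  (s'.path ρ' ↔ s'.path ρ) := by
                intro ρ' hagree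
                show (s.path ρ' ∧ G.guard s.loc a'.1 fun y => s.smem y ρ') ↔
                  (s.path ρ ∧ G.guard s.loc a'.1 fun y => s.smem y ρ)
                rw [hmemeq ρ' hagree]
                exact and_congr_left fun _ => hdepp ρ' hagree
              have hpath' : s'.path ρ := ⟨hpathρ, hg⟩
              have hhead' : (a' :: rest').head? = some (s'.loc, fun y => s'.smem y ρ) := by
                have : a' = (s'.loc, fun y => s'.smem y ρ) := by
                  refine Prod.ext rfl ?_
                  show a'.2 =
                    fun y => (Function.update s.smem x fun ρ' => e fun z => s.smem z ρ') y ρ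
                  rw [conc_smem_update]
                  exact hex'
                rw [List.head?_cons, this]
              obtain ⟨τ', ρ', hh', hc', hp', hconc', hag'⟩ :=
                ih s' ρ hch' hhead' hpath' hdepm' hdepp'
              cases τ' with
              | nil => simp at hh'
              | cons t0 tτ =>
                  have ht0 : t0 = s' := by simpa using hh'
                  subst ht0
                  refine ⟨s :: s' :: tτ, ρ', rfl, ?_, ?_, ?_, ?_⟩
                  · rw [List.Chain', List.isChain_cons_cons]
                    refine ⟨⟨hE, rfl, ⟨ρ, hpath'⟩, ?_⟩, hc'⟩
                    show (G.effect s.loc s'.loc).symExec (s.smem, s.ctr) (s'.smem, s'.ctr)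
                    rw [show s'.loc = a'.1 from rfl, heff]
                    exact ⟨rfl, rfl⟩
                  · unfold pathOf
                    rw [List.getLast?_cons_cons]
                    exact hp'
                  · show (s.loc, fun y => s.smem y ρ') :: conc ρ' (s' :: tτ) = _
                    rw [hconc', hmemeq ρ' hag']
                  · exact hag'
          | havoc x =>
              rw [show ((s.loc, fun x => s.smem x ρ) : State Val X L).1 = s.loc from rfl,
                heff] at hex
              obtain ⟨v, hv⟩ := hex
              set ρ₁ : ℕ → Val := Function.update ρ s.ctr v with hρ₁
              have hag1 : ∀ n < s.ctr, ρ₁ n = ρ n := by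
                intro n hn
                exact Function.update_of_ne (Nat.ne_of_lt hn) _ _
              set s' : SymState Val X L :=
                ⟨a'.1, P, Function.update s.smem x (fun ρ' => ρ' s.ctr), s.ctr + 1⟩ with hs'
              have hmemeq : ∀ ρ' : ℕ → Val, (∀ n < s.ctr, ρ' n = ρ n) →
                  (fun y => s.smem y ρ') = fun y => s.smem y ρ := by
                intro ρ' hagree; funext y; exact hdepm y ρ' hagree
              have hdepm' : ∀ (y : X) (ρ' : ℕ → Val), (∀ n < s'.ctr, ρ' n = ρ₁ n) →
                  s'.smem y ρ' = s'.smem y ρ₁ := by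
                intro y ρ' hagree
                by_cases hy : y = x
                · subst hy
                  show (Function.update s.smem y _) y ρ' = (Function.update s.smem y _) y ρ₁
                  simp only [Function.update_self]
                  exact hagree s.ctr (Nat.lt_succ_self _)
                · show (Function.update s.smem x _) y ρ' = (Function.update s.smem x _) y ρ₁
                  simp only [Function.update_of_ne hy]
                  rw [hdepm y ρ' (fun n hn => (hagree n (Nat.lt_succ_of_lt hn)).trans
                    (hag1 n hn)), hdepm y ρ₁ hag1]
              have hdepp' : ∀ ρ' : ℕ → Val, (∀ n < s'.ctr, ρ' n = ρ₁ n) →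
                  (s'.path ρ' ↔ s'.path ρ₁) := by
                intro ρ' hagree
                have hagρ : ∀ n < s.ctr, ρ' n = ρ n := fun n hn =>
                  (hagree n (Nat.lt_succ_of_lt hn)).trans (hag1 n hn)
                show (s.path ρ' ∧ G.guard s.loc a'.1 fun y => s.smem y ρ') ↔
                  (s.path ρ₁ ∧ G.guard s.loc a'.1 fun y => s.smem y ρ₁)
                rw [hmemeq ρ' hagρ, hmemeq ρ₁ hag1]
                exact and_congr_left fun _ => (hdepp ρ' hagρ).trans (hdepp ρ₁ hag1).symm
              have hpath1 : s'.path ρ₁ := by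
                refine ⟨(hdepp ρ₁ hag1).mpr hpathρ, ?_⟩
                rw [hmemeq ρ₁ hag1]
                exact hg
              have hhead' : (a' :: rest').head? = some (s'.loc, fun y => s'.smem y ρ₁) := by
                have hv' : ρ₁ s.ctr = v := Function.update_self _ _ _
                have : a' = (s'.loc, fun y => s'.smem y ρ₁) := by
                  refine Prod.ext rfl ?_
                  show a'.2 = fun y => (Function.update s.smem x fun ρ' => ρ' s.ctr) y ρ₁
                  rw [conc_smem_update, hmemeq ρ₁ hag1, hv']
                  exact hv
                rw [List.head?_cons, this]
              obtain ⟨τ', ρ', hh', hc', hp', hconc', hag'⟩ :=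
                ih s' ρ₁ hch' hhead' hpath1 hdepm' hdepp'
              have hagρ' : ∀ n < s.ctr, ρ' n = ρ n := fun n hn =>
                (hag' n (Nat.lt_succ_of_lt hn)).trans (hag1 n hn)
              cases τ' with
              | nil => simp at hh'
              | cons t0 tτ =>
                  have ht0 : t0 = s' := by simpa using hh'
                  subst ht0
                  refine ⟨s :: s' :: tτ, ρ', rfl, ?_, ?_, ?_, hagρ'⟩
                  · rw [List.Chain', List.isChain_cons_cons]
                    refine ⟨⟨hE, rfl, ⟨ρ₁, hpath1⟩, ?_⟩, hc'⟩
                    show (G.effect s.loc s'.loc).symExec (s.smem, s.ctr) (s'.smem, s'.ctr)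
                    rw [show s'.loc = a'.1 from rfl, heff]
                    exact ⟨rfl, rfl⟩
                  · unfold pathOf
                    rw [List.getLast?_cons_cons]
                    exact hp'
                  · show (s.loc, fun y => s.smem y ρ') :: conc ρ' (s' :: tτ) = _
                    rw [hconc', hmemeq ρ' hagρ']

end HyperSE

namespace HyperSE

/-- Equivalence of symbolic and concrete trace semantics:
`γ(SymTraces*(G)) = Traces*(G)`, i.e. (soundness) every concretization `γ_ρ(τ̂)` of a
symbolic trace `τ̂` under an assignment `ρ` satisfying `path(τ̂)` is a concrete trace, and
(completeness) every concrete trace arises this way. -/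
theorem conc_symTraces_eq_finTraces {Val X L : Type}
    (m₀ : X → Val) (G : ProgramGraph Val X L) :
    concSet (SymTraces m₀ G) = FinTraces m₀ G := by
  have hValNe : Nonempty Val := by
    cases h : G.effect G.init G.init with
    | assign x e => exact ⟨m₀ x⟩
    | havoc x => exact ⟨m₀ x⟩
  obtain ⟨v0⟩ := hValNe
  ext τ
  constructor
  · rintro ⟨t, ⟨hhead, hchain⟩, ρ, hpath, rfl⟩
    cases t with
    | nil => simp at hhead
    | cons s t' =>
        have hs : s = initSym m₀ G := by simpa using hhead
        subst hs
        exact ⟨rfl, (sound_chain ρ t' _ hchain hpath).1⟩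
  · rintro ⟨hhead, hchain⟩
    obtain ⟨t, ρ', hh, hc, hp, hconc, -⟩ := complete_chain G τ (initSym m₀ G) (fun _ => v0)
      hchain hhead trivial (fun _ _ _ => rfl) (fun _ _ => Iff.rfl)
    exact ⟨t, ⟨hh, hc⟩, ρ', hp, hconc.symm⟩

end HyperSE
end

section
/- Let G be a program graph with locations L, let O ⊆ L, and let k ∈ ℕ. If G is (k,O)-observable, then the set SymTraces^k_O(G) of observed symbolic traces with k observations is finite (assuming a fixed deterministic choice of fresh variables in symbolic execution). -/
open scoped Classical

/-!
Symbolic execution is deterministic once the sequence of locations is fixed, so with finitely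
many locations there are only finitely many symbolic traces of bounded length. A symbolic trace
with `k` observations and a satisfiable path condition concretizes to a concrete trace with the
same observed locations; `(k,O)`-observability gives it a prefix of length `< b` that already
has all `k` observations, and the corresponding prefix of the symbolic trace has the same
projection. Hence every element of `SymTraces^k_O(G)` is the projection of a symbolic trace of
length at most `b + 1`.
-/

theorem List.eq_of_isChain_of_map_eq {α β : Type*} {R : α → α → Prop} (f : α → β)
    (hR : ∀ ⦃s a b⦄, R s a → R s b → f a = f b → a = b) :
    ∀ {l₁ l₂ : List α}, l₁.IsChain R → l₂.IsChain R → l₁.head? = l₂.head? →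
      l₁.map f = l₂.map f → l₁ = l₂
  | [], [], _, _, _, _ => rfl
  | [_], [_], _, _, hhead, _ => by simpa using hhead
  | a :: c :: l₁, b :: d :: l₂, h₁, h₂, hhead, hmap => by
    obtain rfl : a = b := by simpa using hhead
    simp only [List.map_cons, List.cons.injEq] at hmap
    obtain rfl : c = d :=
      hR (List.isChain_cons_cons.mp h₁).1 (List.isChain_cons_cons.mp h₂).1 hmap.2.1
    rw [List.eq_of_isChain_of_map_eq (l₁ := c :: l₁) (l₂ := c :: l₂) f hR h₁.tail h₂.tail rfl
      (by simp [hmap.2.2])]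
  | [], _ :: _, _, _, _, hmap | _ :: _, [], _, _, _, hmap
  | [_], _ :: _ :: _, _, _, _, hmap | _ :: _ :: _, [_], _, _, _, hmap => by simp at hmap

namespace HyperSE

section

variable {Val X L : Type} {m₀ : X → Val} {G : ProgramGraph Val X L} {ρ : ℕ → Val}

theorem ProgramGraph.SymStep.eq_of_loc_eq {s a b : SymState Val X L}
    (ha : G.SymStep s a) (hb : G.SymStep s b) (hloc : a.loc = b.loc) : a = b := by
  obtain ⟨la, pa, ma, ca⟩ := a
  obtain ⟨lb, pb, mb, cb⟩ := b
  obtain rfl : la = lb := hloc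
  obtain ⟨-, hpa, -, hea⟩ := ha
  obtain ⟨-, hpb, -, heb⟩ := hb
  simp only [SymState.mk.injEq, true_and] at hpa hpb hea heb ⊢
  refine ⟨hpa.trans hpb.symm, ?_⟩
  cases h : G.effect s.loc la <;> simp only [h, Instr.symExec] at hea heb <;> grind

theorem ProgramGraph.SymStep.path_of_path {s₁ s₂ : SymState Val X L} (h : G.SymStep s₁ s₂)
    (hρ : s₂.path ρ) : s₁.path ρ := by
  rw [h.2.1] at hρ
  exact hρ.1

theorem ProgramGraph.SymStep.step_conc {s₁ s₂ : SymState Val X L} (h : G.SymStep s₁ s₂)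
    (hρ : s₂.path ρ) :
    G.Step (s₁.loc, fun x => s₁.smem x ρ) (s₂.loc, fun x => s₂.smem x ρ) := by
  obtain ⟨hedge, hpath, -, hexec⟩ := h
  rw [hpath] at hρ
  refine ⟨hedge, hρ.2, ?_⟩
  cases he : G.effect s₁.loc s₂.loc with
  | assign x e =>
    simp only [he, Instr.symExec] at hexec
    simp only [Instr.exec, hexec.2]
    funext y
    rcases eq_or_ne y x with rfl | hy <;> simp [*]
  | havoc x =>
    simp only [he, Instr.symExec] at hexec
    refine ⟨ρ s₁.ctr, ?_⟩
    simp only [hexec.2]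
    funext y
    rcases eq_or_ne y x with rfl | hy <;> simp [*]

theorem isChain_conc {τ : List (SymState Val X L)} (hτ : τ.IsChain G.SymStep)
    (hρ : pathOf τ ρ) : (conc ρ τ).IsChain G.Step := by
  have hpath : ∀ s ∈ τ, s.path ρ := hτ.backwards_induction _ _
    (fun _ _ h hy => h.path_of_path hy) (fun hne => by
      rwa [pathOf, List.getLast?_eq_some_getLast hne] at hρ)
  exact (List.isChain_map _).2 <| hτ.imp_of_mem_imp fun _ _ _ hb h => h.step_conc (hpath _ hb)

theorem exists_pathOf_of_isChain :
    ∀ {τ : List (SymState Val X L)}, τ.IsChain G.SymStep → 2 ≤ τ.length → ∃ ρ, pathOf τ ρ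
  | [_, _], hτ, _ => by simpa [pathOf] using (List.isChain_pair.mp hτ).2.2.1
  | _ :: b :: c :: l, hτ, _ => by
    simpa only [pathOf, List.getLast?_cons_cons] using
      exists_pathOf_of_isChain (τ := b :: c :: l) hτ.tail (by simp)
  | [], _, h | [_], _, h => by simp at h

theorem conc_mem_finTraces {τ : List (SymState Val X L)} (hτ : τ ∈ SymTraces m₀ G)
    (hρ : pathOf τ ρ) : conc ρ τ ∈ FinTraces m₀ G :=
  ⟨by simp [conc, hτ.1, initSym], isChain_conc hτ.2 hρ⟩

theorem take_succ_mem_symTraces {τ : List (SymState Val X L)} (hτ : τ ∈ SymTraces m₀ G)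
    (n : ℕ) : τ.take (n + 1) ∈ SymTraces m₀ G :=
  ⟨by simp [List.head?_take, hτ.1], List.IsChain.take hτ.2 _⟩

theorem obsLen_conc (O : Set L) (τ : List (SymState Val X L)) :
    obsLen O (conc ρ τ) = (obsSym O τ).length := by
  simp [obsLen, obs, conc, obsSym, List.filter_map, Function.comp_def]

theorem finite_symTraces_length_le [Finite L] (m₀ : X → Val) (G : ProgramGraph Val X L)
    (B : ℕ) : {τ | τ ∈ SymTraces m₀ G ∧ τ.length ≤ B}.Finite := by
  refine Set.Finite.of_finite_image ?_ fun τ₁ h₁ τ₂ h₂ hloc =>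
    List.eq_of_isChain_of_map_eq (R := G.SymStep) SymState.loc
      (fun _ _ _ => ProgramGraph.SymStep.eq_of_loc_eq) h₁.1.2 h₂.1.2
      (h₁.1.1.trans h₂.1.1.symm) hloc
  refine (List.finite_length_le L B).subset ?_
  rintro _ ⟨τ, ⟨-, hlen⟩, rfl⟩
  simpa using hlen

theorem ProgramGraph.Observable.exists_bound_symTraces {O : Set L} {k : ℕ}
    (h : G.Observable m₀ O k) :
    ∃ B, ∀ τ ∈ SymTraces m₀ G, (obsSym O τ).length = k →
      ∃ τ₀ ∈ SymTraces m₀ G, τ₀.length ≤ B ∧ obsSym O τ₀ = obsSym O τ := by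
  obtain ⟨b, hb⟩ := h
  refine ⟨b + 1, fun τ hτ hk => ?_⟩
  -- A one-state trace may have no assignment of symbolic variables at all (when `Val` is empty).
  by_cases hshort : τ.length ≤ 1
  · exact ⟨τ, hτ, by omega, rfl⟩
  obtain ⟨ρ, hρ⟩ := exists_pathOf_of_isChain hτ.2 (by omega)
  obtain ⟨τ', hpre, hτ'k, hτ'b⟩ :=
    hb _ (conc_mem_finTraces hτ hρ) (by rw [obsLen_conc, hk])
  set n := τ'.length
  have hτ' : τ' = conc ρ (τ.take n) := by
    rw [List.prefix_iff_eq_take.mp hpre, conc, conc, List.map_take]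
  have hn : (obsSym O (τ.take n)).length = k := by
    rw [← obsLen_conc (ρ := ρ), ← hτ', hτ'k]
  -- One more state keeps the prefix nonempty, hence a symbolic trace, without losing observations.
  have hpre' : obsSym O (τ.take (n + 1)) <+: obsSym O τ := (List.take_prefix _ _).filter _
  refine ⟨τ.take (n + 1), take_succ_mem_symTraces hτ n,
    (List.length_take_le _ _).trans (by omega), hpre'.eq_of_length ?_⟩
  refine le_antisymm hpre'.length_le ?_
  calc (obsSym O τ).length = (obsSym O (τ.take n)).length := by rw [hk, hn]
    _ ≤ (obsSym O (τ.take (n + 1))).length :=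
      ((List.take_prefix_take_left n.le_succ).filter _).length_le

end

/-- If the program graph `G` (with finitely many locations) is
`(k,O)`-observable, then the set `SymTraces^k_O(G)` of observed symbolic traces with `k`
observations is finite (with the fixed deterministic choice of fresh variables used by
the symbolic execution). -/
theorem symTracesKO_finite_of_observable {Val X L : Type} [Fintype L]
    (m₀ : X → Val) (G : ProgramGraph Val X L) (O : Set L) (k : ℕ)
    (h : ProgramGraph.Observable m₀ G O k) :
    (SymTracesKO m₀ G O k).Finite := by
  obtain ⟨B, hB⟩ := h.exists_bound_symTraces
  refine ((finite_symTraces_length_le m₀ G B).image (obsSym O)).subset ?_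
  rintro _ ⟨⟨τ, hτ, rfl⟩, hk⟩
  obtain ⟨τ₀, hτ₀, hlen, heq⟩ := hB τ hτ hk
  exact ⟨τ₀, ⟨hτ₀, hlen⟩, heq⟩

end HyperSE
end

section
/- Soundness of the naive bug-finding algorithm: let ψ be an OHyperLTL_safe formula that is k-encodable for every k ≤ n. If there exists k with 1 ≤ k ≤ n such that the closed formula ⟦ψ⟧^k_∅ is not valid in the underlying structure (i.e., its negation is satisfiable), then ¬(⊨^{≤n} ψ). -/
open scoped Classical

namespace HyperSE

variable {Val X L V : Type}

/-! ### Auxiliary development for Statement 12 -/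

lemma update_eval (f : X → (ℕ → Val) → Val) (x : X) (g : (ℕ → Val) → Val)
    (ρ : ℕ → Val) :
    (fun y => Function.update f x g y ρ) = Function.update (fun y => f y ρ) x (g ρ) := by
  funext y
  by_cases h : y = x <;> simp [Function.update_apply, h]

/-- A symbolic state depends only on the symbolic variables below its counter. -/
def SelfDep (s : SymState Val X L) : Prop :=
  ∀ ρ ρ' : ℕ → Val, (∀ n < s.ctr, ρ n = ρ' n) →
    (s.path ρ ↔ s.path ρ') ∧ ∀ x, s.smem x ρ = s.smem x ρ'

lemma symStep_ctr_le {G : ProgramGraph Val X L} {a b : SymState Val X L}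
    (h : G.SymStep a b) : a.ctr ≤ b.ctr := by
  obtain ⟨-, -, -, hse⟩ := h
  cases heff : G.effect a.loc b.loc <;> rw [heff] at hse <;>
    simp [Instr.symExec] at hse <;> omega

lemma symStep_path_mono {G : ProgramGraph Val X L} {a b : SymState Val X L}
    (h : G.SymStep a b) {ρ : ℕ → Val} (hb : b.path ρ) : a.path ρ := by
  rw [h.2.1] at hb; exact hb.1

lemma symStep_selfDep {G : ProgramGraph Val X L} {a b : SymState Val X L}
    (h : G.SymStep a b) (ha : SelfDep a) : SelfDep b := by
  have hctr : a.ctr ≤ b.ctr := symStep_ctr_le h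
  obtain ⟨-, hpath, -, hse⟩ := h
  intro ρ ρ' hagree
  have hag' : ∀ n < a.ctr, ρ n = ρ' n := fun n hn => hagree n (lt_of_lt_of_le hn hctr)
  have hmem : ∀ x, a.smem x ρ = a.smem x ρ' := (ha ρ ρ' hag').2
  have hpiff : a.path ρ ↔ a.path ρ' := (ha ρ ρ' hag').1
  constructor
  · rw [hpath]
    exact and_congr hpiff (iff_of_eq (congrArg _ (funext hmem)))
  · intro x
    cases heff : G.effect a.loc b.loc with
    | assign y e =>
        rw [heff] at hse
        obtain ⟨-, hsm⟩ := hse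
        have hsm' : b.smem = Function.update a.smem y fun ρ => e fun z => a.smem z ρ := hsm
        rw [hsm']
        by_cases hxy : x = y
        · subst hxy
          simp only [Function.update_self]
          exact congrArg e (funext hmem)
        · simp only [Function.update_of_ne hxy]
          exact hmem x
    | havoc y =>
        rw [heff] at hse
        obtain ⟨hc, hsm⟩ := hse
        have hc' : b.ctr = a.ctr + 1 := hc
        have hsm' : b.smem = Function.update a.smem y fun ρ => ρ a.ctr := hsm
        rw [hsm']
        by_cases hxy : x = y
        · subst hxy
          simp only [Function.update_self]
          exact hagree a.ctr (by omega)
        · simp only [Function.update_of_ne hxy]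
          exact hmem x

lemma chain_all_selfDep {G : ProgramGraph Val X L} :
    ∀ {a : SymState Val X L} {l : List (SymState Val X L)},
      List.Chain G.SymStep a l → SelfDep a → ∀ s ∈ a :: l, SelfDep s := by
  intro a l hc
  induction l generalizing a with
  | nil =>
      intro ha s hs
      rw [List.mem_singleton] at hs; subst hs; exact ha
  | cons b l ih =>
      intro ha s hs
      have hab : G.SymStep a b := (List.isChain_cons_cons.mp hc).1
      rcases List.mem_cons.mp hs with rfl | hs
      · exact ha
      · exact ih (List.isChain_cons_cons.mp hc).2 (symStep_selfDep hab ha) s hs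

lemma symTraces_selfDep {m₀ : X → Val} {G : ProgramGraph Val X L}
    {τ : List (SymState Val X L)} (h : τ ∈ SymTraces m₀ G) : ∀ s ∈ τ, SelfDep s := by
  obtain ⟨hh, hc⟩ := h
  cases τ with
  | nil => simp at hh
  | cons a l =>
      have ha : a = initSym m₀ G := by simpa using hh
      have hinit : SelfDep a := by
        subst ha; intro ρ ρ' _; exact ⟨Iff.rfl, fun _ => rfl⟩
      exact chain_all_selfDep hc hinit

lemma symTraces_pairwise_ctr {m₀ : X → Val} {G : ProgramGraph Val X L}
    {τ : List (SymState Val X L)} (h : τ ∈ SymTraces m₀ G) :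
    τ.Pairwise (fun a b => a.ctr ≤ b.ctr) := by
  haveI : IsTrans (SymState Val X L) (fun a b => a.ctr ≤ b.ctr) :=
    ⟨fun _ _ _ h1 h2 => le_trans h1 h2⟩
  exact List.isChain_iff_pairwise.mp
    (List.IsChain.imp (fun a b hab => symStep_ctr_le hab) h.2)

lemma pairwise_ctr_le_last :
    ∀ (l : List (SymState Val X L)), l.Pairwise (fun a b => a.ctr ≤ b.ctr) →
      ∀ {b}, l.getLast? = some b → ∀ s ∈ l, s.ctr ≤ b.ctr := by
  intro l
  induction l with
  | nil => intro _ b hb; simp at hb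
  | cons a l ih =>
      intro hp b hb s hs
      cases l with
      | nil =>
          simp only [List.getLast?_singleton, Option.some_inj] at hb
          rw [List.mem_singleton] at hs
          subst hb; subst hs
          exact le_refl _
      | cons c l' =>
          rw [List.getLast?_cons_cons] at hb
          have hbmem : b ∈ c :: l' := List.mem_of_getLast? hb
          rcases List.mem_cons.mp hs with rfl | hs'
          · exact (List.pairwise_cons.mp hp).1 b hbmem
          · exact ih (List.pairwise_cons.mp hp).2 hb s hs'

lemma pathOf_eq {τ : List (SymState Val X L)} {b : SymState Val X L}
    (h : τ.getLast? = some b) : pathOf τ = b.path := by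
  unfold pathOf; rw [h]

lemma ctrOf_eq {τ : List (SymState Val X L)} {b : SymState Val X L}
    (h : τ.getLast? = some b) : ctrOf τ = b.ctr := by
  unfold ctrOf; rw [h]

lemma obs_conc {O : Set L} (ρ : ℕ → Val) (τ : List (SymState Val X L)) :
    obs O (conc ρ τ) = conc ρ (obsSym O τ) := by
  unfold obs conc obsSym
  rw [List.filter_map]
  rfl

lemma chain_path_all {G : ProgramGraph Val X L} {ρ : ℕ → Val} :
    ∀ (l : List (SymState Val X L)) (a : SymState Val X L),
      List.Chain' G.SymStep (l ++ [a]) → a.path ρ → ∀ s ∈ l ++ [a], s.path ρ := by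
  intro l
  induction l using List.reverseRecOn with
  | nil =>
      intro a _ hpa s hs
      simp only [List.nil_append, List.mem_singleton] at hs
      subst hs; exact hpa
  | append_singleton l b ih =>
      intro a hc hpa s hs
      obtain ⟨hc1, -, hstep⟩ := List.isChain_append.mp hc
      have hba : G.SymStep b a :=
        hstep b (by simp [List.getLast?_concat]) a (by simp)
      have hpb : b.path ρ := symStep_path_mono hba hpa
      rcases List.mem_append.mp hs with hs' | hs'
      · exact ih b hc1 hpb s hs'
      · rw [List.mem_singleton] at hs'; subst hs'; exact hpa

lemma symStep_step {G : ProgramGraph Val X L} {a b : SymState Val X L} {ρ : ℕ → Val}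
    (h : G.SymStep a b) (hpb : b.path ρ) :
    G.Step (a.loc, fun x => a.smem x ρ) (b.loc, fun x => b.smem x ρ) := by
  obtain ⟨hedge, hpath, -, hse⟩ := h
  rw [hpath] at hpb
  refine ⟨hedge, hpb.2, ?_⟩
  show Instr.exec (G.effect a.loc b.loc) _ _
  cases heff : G.effect a.loc b.loc with
  | assign y e =>
      rw [heff] at hse
      obtain ⟨-, hsm⟩ := hse
      have hsm' : b.smem = Function.update a.smem y fun ρ => e fun z => a.smem z ρ := hsm
      show (fun x => b.smem x ρ) = _
      simp only [hsm']
      exact update_eval a.smem y _ ρ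
  | havoc y =>
      rw [heff] at hse
      obtain ⟨-, hsm⟩ := hse
      have hsm' : b.smem = Function.update a.smem y fun ρ => ρ a.ctr := hsm
      exact ⟨ρ a.ctr, by
        show (fun x => b.smem x ρ) = _
        simp only [hsm']
        exact update_eval a.smem y _ ρ⟩

/-- Soundness of symbolic execution. -/
lemma sym_sound {m₀ : X → Val} {G : ProgramGraph Val X L} {O : Set L} :
    ∀ (τ : List (SymState Val X L)), τ ∈ SymTraces m₀ G →
      ∀ ρ : ℕ → Val, pathOf (obsSym O τ) ρ →
      ∃ τ' ∈ FinTraces m₀ G, obs O τ' = conc ρ (obsSym O τ) := by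
  intro τ
  induction τ using List.reverseRecOn with
  | nil => intro h; obtain ⟨h1, -⟩ := h; simp at h1
  | append_singleton l a ih =>
      intro h ρ hp
      by_cases hla : a.loc ∈ O
      · -- last state observed
        have hobs : obsSym O (l ++ [a]) = obsSym O l ++ [a] := by
          simp [obsSym, List.filter_append, hla]
        have hpa : a.path ρ := by
          rw [hobs, pathOf_eq List.getLast?_concat] at hp
          exact hp
        have hall : ∀ s ∈ l ++ [a], s.path ρ := chain_path_all l a h.2 hpa
        refine ⟨conc ρ (l ++ [a]), ⟨?_, ?_⟩, (obs_conc ρ (l ++ [a]))⟩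
        · show (List.map _ (l ++ [a])).head? = _
          rw [List.head?_map, h.1]
          rfl
        · show (List.map _ (l ++ [a])).IsChain G.Step
          rw [List.isChain_map]
          have h2 : List.IsChain G.SymStep (l ++ [a]) := h.2
          rw [List.isChain_iff_getElem] at h2 ⊢
          intro i hi
          exact symStep_step (h2 i hi) (hall _ (List.getElem_mem _))
      · -- last state not observed
        have hobs : obsSym O (l ++ [a]) = obsSym O l := by
          simp [obsSym, List.filter_append, hla]
        cases hl : l with
        | nil =>
            subst hl
            have ha : a = initSym m₀ G := by simpa using h.1
            subst ha
            simp only [initSym] at hla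
            refine ⟨[(G.init, m₀)], ⟨rfl, List.isChain_singleton _⟩, ?_⟩
            rw [hobs]
            simp [obs, obsSym, conc, hla]
        | cons b l' =>
            subst hl
            have hlmem : (b :: l') ∈ SymTraces m₀ G := by
              refine ⟨?_, (List.isChain_append.mp h.2).1⟩
              rw [← h.1]; rfl
            rw [hobs] at hp ⊢
            exact ih hlmem ρ hp

lemma sym_sound_KO {m₀ : X → Val} {G : ProgramGraph Val X L} {O : Set L} {k : ℕ}
    {t : List (SymState Val X L)} (ht : t ∈ SymTracesKO m₀ G O k) {ρ : ℕ → Val}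
    (hp : pathOf t ρ) : conc ρ t ∈ TracesKO m₀ G O k := by
  obtain ⟨⟨τ, hτ, rfl⟩, hlen⟩ := ht
  obtain ⟨τ', hτ', hobs⟩ := sym_sound τ hτ ρ hp
  exact ⟨⟨τ', hτ', hobs.symm⟩, by simpa [conc] using hlen⟩

lemma symTraces_append {m₀ : X → Val} {G : ProgramGraph Val X L}
    {τh : List (SymState Val X L)} (hτh : τh ∈ SymTraces m₀ G)
    {b a : SymState Val X L} (hb : τh.getLast? = some b) (hba : G.SymStep b a) :
    τh ++ [a] ∈ SymTraces m₀ G := by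
  have hne : τh ≠ [] := by intro h; rw [h] at hb; simp at hb
  constructor
  · rw [← hτh.1]
    cases τh with
    | nil => exact absurd rfl hne
    | cons => rfl
  · show List.IsChain G.SymStep (τh ++ [a])
    rw [List.isChain_append]
    refine ⟨hτh.2, List.isChain_singleton _, ?_⟩
    intro u hu y hy
    rw [hb, Option.mem_some_iff] at hu
    simp only [List.head?_cons, Option.mem_some_iff] at hy
    subst hu; subst hy
    exact hba

lemma conc_append (ρ : ℕ → Val) (t₁ t₂ : List (SymState Val X L)) :
    conc ρ (t₁ ++ t₂) = conc ρ t₁ ++ conc ρ t₂ := by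
  simp [conc]

/-- Completeness of symbolic execution. -/
lemma sym_complete {m₀ : X → Val} {G : ProgramGraph Val X L} :
    ∀ (τ : List (State Val X L)), τ ∈ FinTraces m₀ G → ∀ ρ₀ : ℕ → Val,
      ∃ τh ∈ SymTraces m₀ G, ∃ ρ : ℕ → Val, conc ρ τh = τ ∧ ∀ s ∈ τh, s.path ρ := by
  intro τ
  induction τ using List.reverseRecOn with
  | nil => intro h; obtain ⟨h1, -⟩ := h; simp at h1
  | append_singleton l s ih =>
      intro h ρ₀
      rcases eq_or_ne l [] with rfl | hl
      · have hs : s = (G.init, m₀) := by simpa using h.1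
        refine ⟨[initSym m₀ G], ⟨rfl, List.isChain_singleton _⟩, ρ₀, ?_, ?_⟩
        · rw [hs]; rfl
        · intro u hu; rw [List.mem_singleton] at hu; subst hu; trivial
      · obtain ⟨hcl, -, hstep⟩ := List.isChain_append.mp h.2
        have hlmem : l ∈ FinTraces m₀ G := by
          refine ⟨?_, hcl⟩
          rw [← h.1]
          cases l with
          | nil => exact absurd rfl hl
          | cons => rfl
        obtain ⟨τh, hτh, ρ', hconc, hpaths⟩ := ih hlmem ρ₀
        have hτne : τh ≠ [] := by
          intro hnil; rw [hnil] at hconc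
          exact hl (by rw [← hconc]; rfl)
        obtain ⟨b, hb⟩ : ∃ b, τh.getLast? = some b :=
          ⟨τh.getLast hτne, List.getLast?_eq_getLast hτne⟩
        have hlast : l.getLast? = some (b.loc, fun x => b.smem x ρ') := by
          rw [← hconc]
          show (List.map _ τh).getLast? = _
          rw [List.getLast?_map, hb]
          rfl
        have hstep' : G.Step (b.loc, fun x => b.smem x ρ') s :=
          hstep _ hlast s rfl
        obtain ⟨hedge, hguard, hexec⟩ := hstep'
        have hbpath : b.path ρ' := hpaths b (List.mem_of_getLast? hb)
        have hsd : ∀ u ∈ τh, SelfDep u := symTraces_selfDep hτh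
        have hctrle : ∀ u ∈ τh, u.ctr ≤ b.ctr :=
          pairwise_ctr_le_last τh (symTraces_pairwise_ctr hτh) hb
        revert hexec
        show Instr.exec (G.effect b.loc s.1) _ _ → _
        cases heff : G.effect b.loc s.1 with
        | assign x e =>
            intro hexec
            -- hexec : s.2 = Function.update (fun y => b.smem y ρ') x (e fun y => b.smem y ρ')
            refine ⟨τh ++ [⟨s.1,
                fun ρ => b.path ρ ∧ G.guard b.loc s.1 fun y => b.smem y ρ,
                Function.update b.smem x fun ρ => e fun y => b.smem y ρ, b.ctr⟩],
              symTraces_append hτh hb ?_, ρ', ?_, ?_⟩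
            · refine ⟨hedge, rfl, ⟨ρ', hbpath, hguard⟩, ?_⟩
              show Instr.symExec (G.effect b.loc s.1) _ _
              rw [heff]
              exact ⟨rfl, rfl⟩
            · rw [conc_append, hconc]
              have hexec' : s.2 = Function.update (fun y => b.smem y ρ') x
                  (e fun y => b.smem y ρ') := hexec
              have h2 : (fun y => Function.update b.smem x
                  (fun ρ => e fun z => b.smem z ρ) y ρ') = s.2 := by
                rw [update_eval, hexec']
              exact congrArg (l ++ ·) (congrArg (fun z => [z]) (Prod.ext rfl h2))
            · intro u hu
              rcases List.mem_append.mp hu with hu' | hu'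
              · exact hpaths u hu'
              · rw [List.mem_singleton] at hu'; subst hu'
                exact ⟨hbpath, hguard⟩
        | havoc x =>
            intro hexec
            have hexec' : ∃ v : Val, s.2 = Function.update (fun y => b.smem y ρ') x v := hexec
            obtain ⟨v, hv⟩ := hexec'
            have hagree : ∀ n < b.ctr, ρ' n = Function.update ρ' b.ctr v n := by
              intro n hn
              rw [Function.update_of_ne (by omega)]
            have hdep : ∀ u ∈ τh, ∀ n < u.ctr, ρ' n = Function.update ρ' b.ctr v n :=
              fun u hu n hn => hagree n (lt_of_lt_of_le hn (hctrle u hu))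
            have hsmem_eq : ∀ u ∈ τh, ∀ y,
                u.smem y ρ' = u.smem y (Function.update ρ' b.ctr v) :=
              fun u hu y => (hsd u hu _ _ (hdep u hu)).2 y
            have hpath_eq : ∀ u ∈ τh,
                (u.path ρ' ↔ u.path (Function.update ρ' b.ctr v)) :=
              fun u hu => (hsd u hu _ _ (hdep u hu)).1
            have hbmem := List.mem_of_getLast? hb
            have hbsm : (fun y => b.smem y (Function.update ρ' b.ctr v))
                = fun y => b.smem y ρ' :=
              funext fun y => (hsmem_eq b hbmem y).symm
            have hbp'' : b.path (Function.update ρ' b.ctr v) :=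
              (hpath_eq b hbmem).mp hbpath
            have hguard'' : G.guard b.loc s.1
                fun y => b.smem y (Function.update ρ' b.ctr v) := by
              rw [hbsm]; exact hguard
            refine ⟨τh ++ [⟨s.1,
                fun ρ => b.path ρ ∧ G.guard b.loc s.1 fun y => b.smem y ρ,
                Function.update b.smem x fun ρ => ρ b.ctr, b.ctr + 1⟩],
              symTraces_append hτh hb ?_, Function.update ρ' b.ctr v, ?_, ?_⟩
            · refine ⟨hedge, rfl, ⟨Function.update ρ' b.ctr v, hbp'', hguard''⟩, ?_⟩
              show Instr.symExec (G.effect b.loc s.1) _ _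
              rw [heff]
              exact ⟨rfl, rfl⟩
            · have hconc'' : conc (Function.update ρ' b.ctr v) τh = l := by
                rw [← hconc]
                exact List.map_congr_left fun u hu =>
                  Prod.ext rfl (funext fun y => (hsmem_eq u hu y).symm)
              rw [conc_append, hconc'']
              have h2 : (fun y => Function.update b.smem x (fun ρ => ρ b.ctr) y
                  (Function.update ρ' b.ctr v)) = s.2 := by
                rw [update_eval, hbsm, hv]
                simp only [Function.update_self]
              exact congrArg (l ++ ·) (congrArg (fun z => [z]) (Prod.ext rfl h2))
            · intro u hu
              rcases List.mem_append.mp hu with hu' | hu'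
              · exact (hpath_eq u hu').mp (hpaths u hu')
              · rw [List.mem_singleton] at hu'; subst hu'
                exact ⟨hbp'', hguard''⟩

lemma memAt_eq_smemAt {m₀ : X → Val} {Pi : V → List (State Val X L)}
    {Pih : V → List (SymState Val X L)} {ρ : V → ℕ → Val}
    (hsim : SimRho ρ Pi Pih) (i : ℕ) : memAt m₀ Pi i = smemAt m₀ Pih ρ i := by
  funext π x
  unfold memAt smemAt
  rw [(hsim π).2]
  simp only [conc, List.getElem?_map]
  cases (Pih π)[i]? with
  | none => rfl
  | some u => rfl

/-- Completeness of the symbolic encoding w.r.t. the bounded semantics. -/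
lemma satK_enc {m₀ : X → Val} {k : ℕ} :
    ∀ (ψ : HForm Val X L V) (Pi : V → List (State Val X L))
      (Pih : V → List (SymState Val X L)) (ρ : V → ℕ → Val),
      SimRho ρ Pi Pih → SatK m₀ k ψ Pi → Enc m₀ k ψ Pih ρ := by
  intro ψ
  induction ψ with
  | all G O π ψ ih =>
      intro Pi Pih ρ hsim hsat t ht ρ' hag hp
      have hσ : conc (ρ' π) t ∈ TracesKO m₀ G O k := sym_sound_KO ht hp
      refine ih _ (Function.update Pih π t) ρ' ?_ (hsat _ hσ)
      intro π'
      by_cases hππ : π' = π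
      · subst hππ
        rw [Function.update_self, Function.update_self]
        exact ⟨hp, rfl⟩
      · rw [Function.update_of_ne hππ, Function.update_of_ne hππ]
        have hρeq : ρ' π' = ρ π' := funext fun n => hag π' n (Or.inl hππ)
        rw [hρeq]
        exact hsim π'
  | ex G O π ψ ih =>
      intro Pi Pih ρ hsim hsat
      obtain ⟨σ, hσ, hsat'⟩ := hsat
      obtain ⟨⟨τ, hτ, rfl⟩, hlen⟩ := hσ
      obtain ⟨τh, hτh, ρπ, hconc, hpaths⟩ := sym_complete τ hτ (ρ π)
      have hobs : obs O τ = conc ρπ (obsSym O τh) := by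
        rw [← hconc, obs_conc]
      have htKO : obsSym O τh ∈ SymTracesKO m₀ G O k := by
        refine ⟨⟨τh, hτh, rfl⟩, ?_⟩
        have h1 : (conc ρπ (obsSym O τh)).length = (obsSym O τh).length := by
          simp [conc]
        rw [← hobs] at h1
        omega
      have hsub : (obsSym O τh).Sublist τh := List.filter_sublist
      have hsdt : ∀ u ∈ obsSym O τh, SelfDep u :=
        fun u hu => symTraces_selfDep hτh u (hsub.subset hu)
      have hpt : (obsSym O τh).Pairwise (fun a b => a.ctr ≤ b.ctr) :=
        List.Pairwise.sublist hsub (symTraces_pairwise_ctr hτh)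
      have hctrt : ∀ u ∈ obsSym O τh, u.ctr ≤ ctrOf (obsSym O τh) := by
        intro u hu
        cases ht' : (obsSym O τh).getLast? with
        | none =>
            rw [List.getLast?_eq_none_iff] at ht'
            rw [ht'] at hu
            simp at hu
        | some b =>
            rw [ctrOf_eq ht']
            exact pairwise_ctr_le_last _ hpt ht' u hu
      set c := ctrOf (obsSym O τh) with hc
      set ρπ' : ℕ → Val := fun n => if n < c then ρπ n else ρ π n with hρπ'
      have hagρ : ∀ u ∈ obsSym O τh, ∀ n < u.ctr, ρπ n = ρπ' n := by
        intro u hu n hn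
        have : n < c := lt_of_lt_of_le hn (hctrt u hu)
        simp [hρπ', if_pos this]
      have hsm : ∀ u ∈ obsSym O τh, ∀ y, u.smem y ρπ = u.smem y ρπ' :=
        fun u hu y => ((hsdt u hu) ρπ ρπ' (hagρ u hu)).2 y
      have hconct : conc ρπ' (obsSym O τh) = conc ρπ (obsSym O τh) :=
        List.map_congr_left fun u hu =>
          Prod.ext rfl (funext fun y => (hsm u hu y).symm)
      have hpatht : pathOf (obsSym O τh) ρπ' := by
        cases ht' : (obsSym O τh).getLast? with
        | none =>
            rw [List.getLast?_eq_none_iff] at ht'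
            rw [ht']
            trivial
        | some b =>
            rw [pathOf_eq ht']
            have hbm : b ∈ obsSym O τh := List.mem_of_getLast? ht'
            have hbp : b.path ρπ := hpaths b (hsub.subset hbm)
            exact ((hsdt b hbm) ρπ ρπ' (hagρ b hbm)).1.mp hbp
      refine ⟨obsSym O τh, htKO, Function.update ρ π ρπ', ?_, ?_, ?_⟩
      · intro π' n hn
        rcases hn with hne | hge
        · rw [Function.update_of_ne hne]
        · by_cases hππ : π' = π
          · subst hππ
            rw [Function.update_self]
            simp [hρπ', if_neg (show ¬ n < c from not_lt.mpr hge)]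
          · rw [Function.update_of_ne hππ]
      · rw [Function.update_self]; exact hpatht
      · refine ih _ (Function.update Pih π (obsSym O τh)) _ ?_ hsat'
        intro π'
        by_cases hππ : π' = π
        · subst hππ
          rw [Function.update_self, Function.update_self, Function.update_self]
          exact ⟨hpatht, by rw [hobs, ← hconct]⟩
        · rw [Function.update_of_ne hππ, Function.update_of_ne hππ,
            Function.update_of_ne hππ]
          exact hsim π'
  | always φ =>
      intro Pi Pih ρ hsim hsat i hi
      rw [← memAt_eq_smemAt hsim i]
      exact hsat i hi

end HyperSE

namespace HyperSE

/-- Soundness of the naive bug-finding algorithm: if `ψ` is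
`k`-encodable for every `k ≤ n` and for some `k` with `1 ≤ k ≤ n` the closed formula
`⟦ψ⟧^k_∅` is not valid (its negation is satisfiable), then `¬(⊨^{≤n} ψ)`. -/
theorem naive_sound {Val X L V : Type}
    (m₀ : X → Val) (n : ℕ) (ψ : HForm Val X L V)
    (henc : ∀ k ≤ n, HForm.EncodableAt m₀ k ψ)
    (h : ∃ k, 1 ≤ k ∧ k ≤ n ∧ ¬ ∀ ρ : V → ℕ → Val, Enc m₀ k ψ (fun _ => []) ρ) :
    ¬ ModelsUpTo m₀ n ψ := by
  intro hm
  obtain ⟨k, -, hkn, hne⟩ := h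
  apply hne
  intro ρ
  refine satK_enc ψ (fun _ => []) (fun _ => []) ρ ?_ (hm k hkn)
  intro π
  exact ⟨trivial, rfl⟩

end HyperSE
end
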